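/- arXiv:2501.11070 — 2 statements merged into one kernel-verified Lean document; each statement's English description precedes it below -/
import Mathlib

section
/- Let $(\mathcal{A},\Delta)$ be a mock-Lie coalgebra and $\omega$ a skew-symmetric bilinear form such that $(\mathcal{A},\Delta,\omega,[~,~]_\omega)$ is a dual quasitriangular mock-Lie bialgebra, i.e. $\omega$ solves the co-classical mock-Lie Yang-Baxter equation and $[x,y]_\omega = x_{(1)}\omega(x_{(2)},y)-y_{(1)}\omega(x,y_{(2)})$. Then $\omega$ is a symplectic form on the mock-Lie algebra $(\mathcal{A},[~,~]_\omega)$, i.e. $\omega([x,y]_\omega,z) + \omega([y,z]_\omega,x) + \omega([z,x]_\omega,y) = 0$ for all $x,y,z\in\mathcal{A}$. -/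
open TensorProduct LinearMap Module

/-- Cocommutativity. -/
def IsCocomm {K A : Type*} [Field K] [AddCommGroup A] [Module K A]
    (Δ : A →ₗ[K] A ⊗[K] A) : Prop :=
  ∀ x : A, (TensorProduct.comm K A A) (Δ x) = Δ x

/-- The co-Jacobi identity. -/
def IsCoJacobi {K A : Type*} [Field K] [AddCommGroup A] [Module K A]
    (Δ : A →ₗ[K] A ⊗[K] A) : Prop :=
  ∀ x : A,
    (lTensor A Δ) (Δ x) +
    (TensorProduct.assoc K A A A) ((rTensor A Δ) (Δ x)) +
    (TensorProduct.leftComm K A A A) ((lTensor A Δ) (Δ x)) = 0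

/-- `f(w₁)·g(w₂)` for `w = w₁ ⊗ w₂ ∈ A ⊗ A`. -/
noncomputable def pair2 {K A : Type*} [Field K] [AddCommGroup A] [Module K A]
    (f g : Dual K A) (w : A ⊗[K] A) : K :=
  (TensorProduct.lid K K) ((TensorProduct.map f g) w)

/-- `[x,y]_ω = x₍₁₎ ω(x₍₂₎, y) - y₍₁₎ ω(x, y₍₂₎)`. -/
noncomputable def brW {K A : Type*} [Field K] [AddCommGroup A] [Module K A]
    (Δ : A →ₗ[K] A ⊗[K] A) (ω : A →ₗ[K] A →ₗ[K] K) (x y : A) : A :=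
  (TensorProduct.rid K A) ((lTensor A (ω.flip y)) (Δ x)) -
  (TensorProduct.rid K A) ((lTensor A (ω x)) (Δ y))

/-!
For skew-symmetric `ω`, `ω([x,y]_ω, z)` is the pairing of `ω(z,·) ⊗ ω(y,·)` with `Δx` plus that of
`ω(z,·) ⊗ ω(x,·)` with `Δy`. In the cyclic sum each of the three pairings of the co-classical
Yang–Baxter equation occurs twice, once with its tensor factors swapped; cocommutativity undoes the
swap, so the cyclic sum is twice the left-hand side of that equation.
-/

section Pairing

variable {K A : Type*} [Field K] [AddCommGroup A] [Module K A]

lemma pair2_neg_left (f g : Dual K A) (w : A ⊗[K] A) : pair2 (-f) g w = -pair2 f g w := by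
  rw [pair2, pair2, ← neg_one_smul K f, map_smul_left]
  simp

lemma pair2_neg_right (f g : Dual K A) (w : A ⊗[K] A) : pair2 f (-g) w = -pair2 f g w := by
  rw [pair2, pair2, ← neg_one_smul K g, map_smul_right]
  simp

lemma pair2_comm (f g : Dual K A) (w : A ⊗[K] A) :
    pair2 f g (TensorProduct.comm K A A w) = pair2 g f w := by
  induction w using TensorProduct.induction_on with
  | zero => simp [pair2]
  | tmul a b => simp [pair2, mul_comm]
  | add u v hu hv => simp_all [pair2]

lemma pair2_swap_of_isCocomm {Δ : A →ₗ[K] A ⊗[K] A} (hΔ : IsCocomm Δ) (f g : Dual K A) (a : A) :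
    pair2 f g (Δ a) = pair2 g f (Δ a) := by
  rw [← hΔ a, pair2_comm, hΔ a]

lemma apply_rid_lTensor (ω : A →ₗ[K] A →ₗ[K] K) (g : Dual K A) (w : A ⊗[K] A) (z : A) :
    ω (TensorProduct.rid K A (lTensor A g w)) z = pair2 (ω.flip z) g w := by
  induction w using TensorProduct.induction_on with
  | zero => simp [pair2]
  | tmul a b => simp [pair2, mul_comm]
  | add u v hu hv => simp_all [pair2]

end Pairing

section Skew

variable {K A : Type*} [Field K] [AddCommGroup A] [Module K A] {ω : A →ₗ[K] A →ₗ[K] K}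

lemma flip_eq_neg_of_skew (hskew : ∀ x y : A, ω x y = -ω y x) (a : A) : ω.flip a = -ω a := by
  ext b
  simp [hskew b a]

lemma apply_brW_of_skew (Δ : A →ₗ[K] A ⊗[K] A) (hskew : ∀ x y : A, ω x y = -ω y x)
    (x y z : A) :
    ω (brW Δ ω x y) z = pair2 (ω z) (ω y) (Δ x) + pair2 (ω z) (ω x) (Δ y) := by
  simp only [brW, map_sub, LinearMap.sub_apply, apply_rid_lTensor, flip_eq_neg_of_skew hskew,
    pair2_neg_left, pair2_neg_right, neg_neg, sub_neg_eq_add]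

lemma pair2_ybe_of_skew {Δ : A →ₗ[K] A ⊗[K] A} (hskew : ∀ x y : A, ω x y = -ω y x)
    (hybe : ∀ x y z : A,
      pair2 (ω.flip y) (ω.flip z) (Δ x) + pair2 (ω x) (ω y) (Δ z) -
        pair2 (ω x) (ω.flip z) (Δ y) = 0)
    (x y z : A) :
    pair2 (ω y) (ω z) (Δ x) + pair2 (ω x) (ω y) (Δ z) + pair2 (ω x) (ω z) (Δ y) = 0 := by
  have h := hybe x y z
  simp only [flip_eq_neg_of_skew hskew, pair2_neg_left, pair2_neg_right, neg_neg,
    sub_neg_eq_add] at h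
  exact h

end Skew

theorem stmt8_general {K A : Type*} [Field K]
    [AddCommGroup A] [Module K A]
    (Δ : A →ₗ[K] A ⊗[K] A) (ω : A →ₗ[K] A →ₗ[K] K)
    (hcocomm : IsCocomm Δ)
    (hskew : ∀ x y : A, ω x y = - ω y x)
    (hybe : ∀ x y z : A,
      pair2 (ω.flip y) (ω.flip z) (Δ x) + pair2 (ω x) (ω y) (Δ z) -
        pair2 (ω x) (ω.flip z) (Δ y) = 0) :
    ∀ x y z : A,
      ω (brW Δ ω x y) z + ω (brW Δ ω y z) x + ω (brW Δ ω z x) y = 0 := by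
  intro x y z
  simp only [apply_brW_of_skew Δ hskew]
  rw [pair2_swap_of_isCocomm hcocomm (ω z) (ω y) x, pair2_swap_of_isCocomm hcocomm (ω z) (ω x) y,
    pair2_swap_of_isCocomm hcocomm (ω y) (ω x) z]
  linear_combination 2 * pair2_ybe_of_skew hskew hybe x y z

/-- For a dual quasitriangular mock-Lie bialgebra, `ω` is a symplectic form on
`(A, [,]_ω)`. -/
theorem stmt8 {K A : Type*} [Field K] [CharZero K]
    [AddCommGroup A] [Module K A]
    (Δ : A →ₗ[K] A ⊗[K] A) (ω : A →ₗ[K] A →ₗ[K] K)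
    (hcocomm : IsCocomm Δ) (hcojac : IsCoJacobi Δ)
    (hskew : ∀ x y : A, ω x y = - ω y x)
    (hybe : ∀ x y z : A,
      pair2 (ω.flip y) (ω.flip z) (Δ x) + pair2 (ω x) (ω y) (Δ z) -
        pair2 (ω x) (ω.flip z) (Δ y) = 0) :
    ∀ x y z : A,
      ω (brW Δ ω x y) z + ω (brW Δ ω y z) x + ω (brW Δ ω z x) y = 0 :=
  stmt8_general Δ ω hcocomm hskew hybe
end

section
/- Let $(\mathcal{A},[~,~],N)$ be a Nijenhuis mock-Lie algebra, $(V,\rho)$ a representation of $(\mathcal{A},[~,~])$, and $S:\mathcal{A}\to\mathcal{A}$, $\alpha,\beta:V\to V$ linear maps. Then $(\mathcal{A}\oplus V, [~,~]_\star, N+\alpha)$ is a Nijenhuis mock-Lie algebra with $S+\beta$ adjoint-admissible to it if and only if: (a) $(V,\rho,\alpha)$ is a representation of $(\mathcal{A},[~,~],N)$; (b) $S$ is adjoint-admissible to $(\mathcal{A},[~,~],N)$; (c) $\beta(\rho(N(x))v)+\rho(x)\beta^2(v)=\rho(N(x))\beta(v)+\beta(\rho(x)\beta(v))$ for all $x,v$;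 (d) $\beta(\rho(y)\alpha(u))+\rho(S^2(y))u = \rho(S(y))\alpha(u)+\beta(\rho(S(y))u)$ for all $y\in\mathcal{A}$, $u\in V$. -/
/-!
The bracket `⋆` is commutative and satisfies the mock-Jacobi identity as soon as `[ , ]` does and
`ρ` is a representation, so only the two operator identities carry conditions. The `A`-component
of each is the corresponding identity on `A`. The `V`-component is a sum of a term bilinear in
`(p.1, q.2)` and one bilinear in `(q.1, p.2)`; testing it on `(x, 0), (0, v)` and on
`(0, u), (y, 0)` separates these, giving the conditions on `V`.
-/

/-- The semi-direct product bracket `[x+u, y+v]_⋆ = [x,y] + ρ(x)v + ρ(y)u` on `A ⊕ V`. -/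
def starBracket {K A V : Type*} [Field K] [AddCommGroup A] [Module K A]
    [AddCommGroup V] [Module K V] (b : A →ₗ[K] A →ₗ[K] A)
    (ρ : A →ₗ[K] V →ₗ[K] V) (p q : A × V) : A × V :=
  (b p.1 q.1, ρ p.1 q.2 + ρ q.1 p.2)

/-- The map `(N+α)(x+u) = N(x) + α(u)` on `A ⊕ V`. -/
def sumMap {K A V : Type*} [Field K] [AddCommGroup A] [Module K A]
    [AddCommGroup V] [Module K V] (N : A →ₗ[K] A) (α : V →ₗ[K] V) (p : A × V) : A × V :=
  (N p.1, α p.2)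

def IsNijenhuis {X : Type*} [Add X] (μ : X → X → X) (N : X → X) : Prop :=
  ∀ p q, μ (N p) (N q) + N (N (μ p q)) = N (μ (N p) q) + N (μ p (N q))

def IsAdjointAdmissible {X : Type*} [Add X] (μ : X → X → X) (N T : X → X) : Prop :=
  ∀ p q, T (μ (N p) q) + μ p (T (T q)) = μ (N p) (T q) + T (μ p (T q))

section SemidirectProduct

variable {K A V : Type*} [Field K] [AddCommGroup A] [Module K A] [AddCommGroup V] [Module K V]
  {b : A →ₗ[K] A →ₗ[K] A} {ρ : A →ₗ[K] V →ₗ[K] V}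

theorem starBracket_comm (hcomm : ∀ x y : A, b x y = b y x) (p q : A × V) :
    starBracket b ρ p q = starBracket b ρ q p := by
  simp only [starBracket, Prod.mk.injEq]
  exact ⟨hcomm _ _, add_comm _ _⟩

theorem starBracket_jacobi (hjac : ∀ x y z : A, b x (b y z) + b y (b z x) + b z (b x y) = 0)
    (hrep : ∀ (x y : A) (v : V), ρ (b x y) v = - ρ x (ρ y v) - ρ y (ρ x v)) (p q r : A × V) :
    starBracket b ρ p (starBracket b ρ q r) + starBracket b ρ q (starBracket b ρ r p) +
      starBracket b ρ r (starBracket b ρ p q) = 0 := by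
  simp only [starBracket, Prod.mk_add_mk, Prod.mk_eq_zero]
  refine ⟨hjac _ _ _, ?_⟩
  simp only [hrep, map_add]
  abel

theorem isNijenhuis_starBracket_iff {N : A →ₗ[K] A} {α : V →ₗ[K] V}
    (hN : IsNijenhuis (fun x y ↦ b x y) N) :
    IsNijenhuis (starBracket b ρ) (sumMap N α) ↔
      ∀ (x : A) (v : V), ρ (N x) (α v) + α (α (ρ x v)) = α (ρ (N x) v) + α (ρ x (α v)) := by
  constructor
  · intro h x v
    simpa [starBracket, sumMap] using congrArg Prod.snd (h (x, 0) (0, v))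
  · intro hα p q
    simp only [starBracket, sumMap, Prod.mk_add_mk, Prod.mk.injEq]
    refine ⟨hN _ _, ?_⟩
    have h := congrArg₂ (· + ·) (hα p.1 q.2) (hα q.1 p.2)
    simp only [map_add] at h ⊢
    abel_nf at h ⊢
    exact h

theorem isAdjointAdmissible_starBracket_iff {N S : A →ₗ[K] A} {α β : V →ₗ[K] V} :
    IsAdjointAdmissible (starBracket b ρ) (sumMap N α) (sumMap S β) ↔
      IsAdjointAdmissible (fun x y ↦ b x y) N S ∧
      (∀ (x : A) (v : V),
        β (ρ (N x) v) + ρ x (β (β v)) = ρ (N x) (β v) + β (ρ x (β v))) ∧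
      (∀ (y : A) (u : V),
        β (ρ y (α u)) + ρ (S (S y)) u = ρ (S y) (α u) + β (ρ (S y) u)) := by
  constructor
  · intro h
    refine ⟨fun x y ↦ ?_, fun x v ↦ ?_, fun y u ↦ ?_⟩
    · simpa [starBracket, sumMap] using congrArg Prod.fst (h (x, 0) (y, 0))
    · simpa [starBracket, sumMap] using congrArg Prod.snd (h (x, 0) (0, v))
    · simpa [starBracket, sumMap] using congrArg Prod.snd (h (0, u) (y, 0))
  · rintro ⟨hS, hβ, hmixed⟩ p q
    simp only [starBracket, sumMap, Prod.mk_add_mk, Prod.mk.injEq]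
    refine ⟨hS _ _, ?_⟩
    have h := congrArg₂ (· + ·) (hβ p.1 q.2) (hmixed q.1 p.2)
    simp only [map_add] at h ⊢
    abel_nf at h ⊢
    exact h

end SemidirectProduct

theorem stmt16_general {K A V : Type*} [Field K]
    [AddCommGroup A] [Module K A] [AddCommGroup V] [Module K V]
    (b : A →ₗ[K] A →ₗ[K] A) (N S : A →ₗ[K] A)
    (ρ : A →ₗ[K] V →ₗ[K] V) (α β : V →ₗ[K] V)
    (hcomm : ∀ x y : A, b x y = b y x)
    (hjac : ∀ x y z : A, b x (b y z) + b y (b z x) + b z (b x y) = 0)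
    (hN : ∀ x y : A, b (N x) (N y) + N (N (b x y)) = N (b (N x) y) + N (b x (N y)))
    (hrep : ∀ (x y : A) (v : V), ρ (b x y) v = - ρ x (ρ y v) - ρ y (ρ x v)) :
    ((∀ p q : A × V, starBracket b ρ p q = starBracket b ρ q p) ∧
     (∀ p q r : A × V,
        starBracket b ρ p (starBracket b ρ q r) +
        starBracket b ρ q (starBracket b ρ r p) +
        starBracket b ρ r (starBracket b ρ p q) = 0) ∧
     (∀ p q : A × V,
        starBracket b ρ (sumMap N α p) (sumMap N α q) +
          sumMap N α (sumMap N α (starBracket b ρ p q)) =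
        sumMap N α (starBracket b ρ (sumMap N α p) q) +
          sumMap N α (starBracket b ρ p (sumMap N α q))) ∧
     (∀ p q : A × V,
        sumMap S β (starBracket b ρ (sumMap N α p) q) +
          starBracket b ρ p (sumMap S β (sumMap S β q)) =
        starBracket b ρ (sumMap N α p) (sumMap S β q) +
          sumMap S β (starBracket b ρ p (sumMap S β q)))) ↔
    ((∀ (x : A) (v : V),
        ρ (N x) (α v) + α (α (ρ x v)) = α (ρ (N x) v) + α (ρ x (α v))) ∧
     (∀ x y : A,
        S (b (N x) y) + b x (S (S y)) = b (N x) (S y) + S (b x (S y))) ∧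
     (∀ (x : A) (v : V),
        β (ρ (N x) v) + ρ x (β (β v)) = ρ (N x) (β v) + β (ρ x (β v))) ∧
     (∀ (y : A) (u : V),
        β (ρ y (α u)) + ρ (S (S y)) u = ρ (S y) (α u) + β (ρ (S y) u))) := by
  refine (and_iff_right (starBracket_comm hcomm)).trans <|
    (and_iff_right (starBracket_jacobi hjac hrep)).trans ?_
  exact and_congr (isNijenhuis_starBracket_iff hN) isAdjointAdmissible_starBracket_iff

/-- `(A ⋉_ρ V, N+α)` is a Nijenhuis mock-Lie algebra with `S+β` adjoint-admissible to it
iff `(V,ρ,α)` is a representation of `(A,[,],N)`, `S` is adjoint-admissible to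
`(A,[,],N)`, `β` is admissible on `(V,ρ)`, and the mixed compatibility holds. -/
theorem stmt16 {K A V : Type*} [Field K] [CharZero K]
    [AddCommGroup A] [Module K A] [AddCommGroup V] [Module K V]
    (b : A →ₗ[K] A →ₗ[K] A) (N S : A →ₗ[K] A)
    (ρ : A →ₗ[K] V →ₗ[K] V) (α β : V →ₗ[K] V)
    (hcomm : ∀ x y : A, b x y = b y x)
    (hjac : ∀ x y z : A, b x (b y z) + b y (b z x) + b z (b x y) = 0)
    (hN : ∀ x y : A, b (N x) (N y) + N (N (b x y)) = N (b (N x) y) + N (b x (N y)))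
    (hrep : ∀ (x y : A) (v : V), ρ (b x y) v = - ρ x (ρ y v) - ρ y (ρ x v)) :
    ((∀ p q : A × V, starBracket b ρ p q = starBracket b ρ q p) ∧
     (∀ p q r : A × V,
        starBracket b ρ p (starBracket b ρ q r) +
        starBracket b ρ q (starBracket b ρ r p) +
        starBracket b ρ r (starBracket b ρ p q) = 0) ∧
     (∀ p q : A × V,
        starBracket b ρ (sumMap N α p) (sumMap N α q) +
          sumMap N α (sumMap N α (starBracket b ρ p q)) =
        sumMap N α (starBracket b ρ (sumMap N α p) q) +
          sumMap N α (starBracket b ρ p (sumMap N α q))) ∧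
     (∀ p q : A × V,
        sumMap S β (starBracket b ρ (sumMap N α p) q) +
          starBracket b ρ p (sumMap S β (sumMap S β q)) =
        starBracket b ρ (sumMap N α p) (sumMap S β q) +
          sumMap S β (starBracket b ρ p (sumMap S β q)))) ↔
    ((∀ (x : A) (v : V),
        ρ (N x) (α v) + α (α (ρ x v)) = α (ρ (N x) v) + α (ρ x (α v))) ∧
     (∀ x y : A,
        S (b (N x) y) + b x (S (S y)) = b (N x) (S y) + S (b x (S y))) ∧
     (∀ (x : A) (v : V),
        β (ρ (N x) v) + ρ x (β (β v)) = ρ (N x) (β v) + β (ρ x (β v))) ∧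
     (∀ (y : A) (u : V),
        β (ρ y (α u)) + ρ (S (S y)) u = ρ (S y) (α u) + β (ρ (S y) u))) :=
  stmt16_general b N S ρ α β hcomm hjac hN hrep
end
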